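/- arXiv:2305.14664 — 3 statements merged into one kernel-verified Lean document; each statement's English description precedes it below -/
import Mathlib

section
/- The function Φ is differentiable on ℝ and its derivative is given by the termwise-differentiated series Φ′(x) = Σ_{n=1}^∞ (30π²n⁴e^{9x/2} − 15πn²e^{5x/2} − 8π³n⁶e^{13x/2}) exp(−πn²e^{2x}) for every x ∈ ℝ. -/
/-!
Termwise differentiation. With `m = n + 1`, every term and its derivative is a polynomial in
`m` and `e^{x/2}` times the Gaussian factor `exp (-π m² e^{2x})`. On the window `(x - 1, x + 1)`
the derivatives are therefore dominated by `C m⁶ exp (-π e^{2(x-1)} m²)`, which is summable,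
so the series may be differentiated term by term.
-/

open Real

/-- The Fourier kernel of the Riemann Xi function:
`Φ(x) = Σ_{n=1}^∞ (4π²n⁴e^{9x/2} − 6πn²e^{5x/2}) exp(−πn²e^{2x})`. -/
noncomputable def RiemannPhi (x : ℝ) : ℝ :=
  ∑' n : ℕ, (4 * π ^ 2 * ((n : ℝ) + 1) ^ 4 * Real.exp (9 * x / 2)
      - 6 * π * ((n : ℝ) + 1) ^ 2 * Real.exp (5 * x / 2))
    * Real.exp (-π * ((n : ℝ) + 1) ^ 2 * Real.exp (2 * x))

noncomputable def phiTerm (m x : ℝ) : ℝ :=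
  (4 * π ^ 2 * m ^ 4 * exp (9 * x / 2) - 6 * π * m ^ 2 * exp (5 * x / 2))
    * exp (-π * m ^ 2 * exp (2 * x))

noncomputable def phiTermDeriv (m x : ℝ) : ℝ :=
  (30 * π ^ 2 * m ^ 4 * exp (9 * x / 2) - 15 * π * m ^ 2 * exp (5 * x / 2)
      - 8 * π ^ 3 * m ^ 6 * exp (13 * x / 2))
    * exp (-π * m ^ 2 * exp (2 * x))

lemma summable_pow_mul_exp_neg_mul_sq {a : ℝ} (ha : 0 < a) (k : ℕ) :
    Summable fun n : ℕ => ((n : ℝ) + 1) ^ k * exp (-a * ((n : ℝ) + 1) ^ 2) := by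
  refine ((summable_nat_add_iff 1).2 (summable_pow_mul_exp_neg_nat_mul k ha)).of_nonneg_of_le
    (fun n => by positivity) fun n => ?_
  have hsq : (n + 1 : ℝ) ≤ (n + 1) ^ 2 := by nlinarith [n.cast_nonneg (α := ℝ)]
  push_cast
  gcongr ?_ * exp ?_
  nlinarith

lemma hasDerivAt_phiTerm (m x : ℝ) : HasDerivAt (phiTerm m) (phiTermDeriv m x) x := by
  have hexp : ∀ c : ℝ, HasDerivAt (fun y => exp (c * y)) (exp (c * x) * c) x := fun c =>
    ((hasDerivAt_id x).const_mul c).exp.congr_deriv (by simp)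
  have h := (((hexp (9 / 2)).const_mul (4 * π ^ 2 * m ^ 4)).sub
    ((hexp (5 / 2)).const_mul (6 * π * m ^ 2))).mul
      ((hexp 2).const_mul (-π * m ^ 2)).exp
  have hhalf : ∀ c y : ℝ, c * y / 2 = c / 2 * y := fun c y => by ring
  unfold phiTerm phiTermDeriv
  simp only [hhalf]
  refine h.congr_deriv ?_
  have h13 : exp (13 / 2 * x) = exp (9 / 2 * x) * exp (2 * x) := by rw [← exp_add]; ring_nf
  have h9 : exp (9 / 2 * x) = exp (5 / 2 * x) * exp (2 * x) := by rw [← exp_add]; ring_nf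
  simp only [Pi.sub_apply, h13, h9]
  ring

lemma exp_neg_pi_mul_sq_mul_exp_le (m : ℝ) {a y : ℝ} (hay : a ≤ y) :
    exp (-π * m ^ 2 * exp (2 * y)) ≤ exp (-(π * exp (2 * a)) * m ^ 2) := by
  rw [exp_le_exp, neg_mul, neg_mul, neg_mul, neg_le_neg_iff, mul_right_comm]
  gcongr

lemma abs_phiTerm_le {m : ℝ} (hm : 1 ≤ m) (x : ℝ) :
    |phiTerm m x| ≤ (4 * π ^ 2 * exp (9 * x / 2) + 6 * π * exp (5 * x / 2))
      * (m ^ 4 * exp (-(π * exp (2 * x)) * m ^ 2)) := by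
  have hpoly : |4 * π ^ 2 * m ^ 4 * exp (9 * x / 2) - 6 * π * m ^ 2 * exp (5 * x / 2)|
      ≤ (4 * π ^ 2 * exp (9 * x / 2) + 6 * π * exp (5 * x / 2)) * m ^ 4 := by
    have h₁ : 6 * π * m ^ 2 * exp (5 * x / 2) ≤ 6 * π * m ^ 4 * exp (5 * x / 2) := by
      gcongr; norm_num
    have h₂ : 0 ≤ 4 * π ^ 2 * m ^ 4 * exp (9 * x / 2) := by positivity
    have h₃ : 0 ≤ 6 * π * m ^ 2 * exp (5 * x / 2) := by positivity
    rw [abs_le]; constructor <;> nlinarith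
  calc |phiTerm m x|
      = |4 * π ^ 2 * m ^ 4 * exp (9 * x / 2) - 6 * π * m ^ 2 * exp (5 * x / 2)|
        * exp (-π * m ^ 2 * exp (2 * x)) := by rw [phiTerm, abs_mul, abs_of_pos (exp_pos _)]
    _ ≤ (4 * π ^ 2 * exp (9 * x / 2) + 6 * π * exp (5 * x / 2)) * m ^ 4
        * exp (-(π * exp (2 * x)) * m ^ 2) :=
      mul_le_mul hpoly (exp_neg_pi_mul_sq_mul_exp_le m le_rfl) (exp_pos _).le (by positivity)
    _ = _ := mul_assoc _ _ _

lemma abs_phiTermDeriv_le {m a b y : ℝ} (hm : 1 ≤ m) (hay : a ≤ y) (hyb : y ≤ b) :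
    |phiTermDeriv m y| ≤
      (30 * π ^ 2 * exp (9 * b / 2) + 15 * π * exp (5 * b / 2) + 8 * π ^ 3 * exp (13 * b / 2))
        * (m ^ 6 * exp (-(π * exp (2 * a)) * m ^ 2)) := by
  have hpoly : |30 * π ^ 2 * m ^ 4 * exp (9 * y / 2) - 15 * π * m ^ 2 * exp (5 * y / 2)
        - 8 * π ^ 3 * m ^ 6 * exp (13 * y / 2)|
      ≤ (30 * π ^ 2 * exp (9 * b / 2) + 15 * π * exp (5 * b / 2)
        + 8 * π ^ 3 * exp (13 * b / 2)) * m ^ 6 := by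
    have h₁ : 30 * π ^ 2 * m ^ 4 * exp (9 * y / 2) ≤ 30 * π ^ 2 * m ^ 6 * exp (9 * b / 2) := by
      gcongr; norm_num
    have h₂ : 15 * π * m ^ 2 * exp (5 * y / 2) ≤ 15 * π * m ^ 6 * exp (5 * b / 2) := by
      gcongr; norm_num
    have h₃ : 8 * π ^ 3 * m ^ 6 * exp (13 * y / 2) ≤ 8 * π ^ 3 * m ^ 6 * exp (13 * b / 2) := by
      gcongr
    have h₄ : 0 ≤ 30 * π ^ 2 * m ^ 4 * exp (9 * y / 2) := by positivity
    have h₅ : 0 ≤ 15 * π * m ^ 2 * exp (5 * y / 2) := by positivity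
    have h₆ : 0 ≤ 8 * π ^ 3 * m ^ 6 * exp (13 * y / 2) := by positivity
    rw [abs_le]; constructor <;> nlinarith
  calc |phiTermDeriv m y|
      = |30 * π ^ 2 * m ^ 4 * exp (9 * y / 2) - 15 * π * m ^ 2 * exp (5 * y / 2)
          - 8 * π ^ 3 * m ^ 6 * exp (13 * y / 2)| * exp (-π * m ^ 2 * exp (2 * y)) := by
        rw [phiTermDeriv, abs_mul, abs_of_pos (exp_pos _)]
    _ ≤ (30 * π ^ 2 * exp (9 * b / 2) + 15 * π * exp (5 * b / 2)
          + 8 * π ^ 3 * exp (13 * b / 2)) * m ^ 6 * exp (-(π * exp (2 * a)) * m ^ 2) :=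
      mul_le_mul hpoly (exp_neg_pi_mul_sq_mul_exp_le m hay) (exp_pos _).le (by positivity)
    _ = _ := mul_assoc _ _ _

theorem hasDerivAt_riemannPhi (x : ℝ) :
    HasDerivAt RiemannPhi (∑' n : ℕ, phiTermDeriv (n + 1) x) x := by
  have hm (n : ℕ) : (1 : ℝ) ≤ n + 1 := le_add_of_nonneg_left n.cast_nonneg
  have hx : x ∈ Set.Ioo (x - 1) (x + 1) := ⟨by linarith, by linarith⟩
  have hsum : Summable fun n : ℕ => phiTerm (n + 1) x :=
    .of_norm_bounded ((summable_pow_mul_exp_neg_mul_sq (by positivity) 4).mul_left _)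
      fun n => abs_phiTerm_le (hm n) x
  exact hasDerivAt_tsum_of_isPreconnected
    ((summable_pow_mul_exp_neg_mul_sq (by positivity) 6).mul_left _) isOpen_Ioo isPreconnected_Ioo
    (fun n y _ => hasDerivAt_phiTerm _ y)
    (fun n y hy => abs_phiTermDeriv_le (hm n) hy.1.le hy.2.le) hx hsum hx

theorem phi_differentiable_deriv_series :
    Differentiable ℝ RiemannPhi ∧
    ∀ x : ℝ, deriv RiemannPhi x =
      ∑' n : ℕ, (30 * π ^ 2 * ((n : ℝ) + 1) ^ 4 * Real.exp (9 * x / 2)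
          - 15 * π * ((n : ℝ) + 1) ^ 2 * Real.exp (5 * x / 2)
          - 8 * π ^ 3 * ((n : ℝ) + 1) ^ 6 * Real.exp (13 * x / 2))
        * Real.exp (-π * ((n : ℝ) + 1) ^ 2 * Real.exp (2 * x)) :=
  ⟨fun x => (hasDerivAt_riemannPhi x).differentiableAt, fun x => (hasDerivAt_riemannPhi x).deriv⟩
end

section
/- For every x ∈ ℝ, Φ(x) > 0; in particular the potential U(x) = −log Φ(x) is well defined for all real x. -/
open Real

/-!
With the Jacobi theta function `θ(t) = ∑_{n ∈ ℤ} exp (-π n² t) = 1 + 2 ∑_{n ≥ 1} exp (-π n² t)`,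
put `F(x) = exp (x / 2) θ(exp (2x))`. Differentiating termwise, `Φ = (F'' - F / 4) / 2`.
The transformation law `θ(t) = t^(-1/2) θ(1/t)` says exactly that `F` is even, hence so are `F''`
and `Φ`. For `x ≥ 0` every term of the series defining `Φ` is positive, since
`2π n² exp (2x) ≥ 2π > 3`.
-/

lemma Function.Even.iteratedDeriv {𝕜 F : Type*} [NontriviallyNormedField 𝕜]
    [NormedAddCommGroup F] [NormedSpace 𝕜 F] {f : 𝕜 → F} (hf : f.Even) {n : ℕ} (hn : Even n) :
    (iteratedDeriv n f).Even := fun a ↦ by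
  simpa [funext hf, hn.neg_one_pow] using (iteratedDeriv_comp_neg n f a).symm

lemma hasDerivAt_exp_const_mul (c x : ℝ) :
    HasDerivAt (fun x ↦ exp (c * x)) (c * exp (c * x)) x := by
  simpa [mul_comm] using ((hasDerivAt_id x).const_mul c).exp

noncomputable def thetaMoment (k : ℕ) (t : ℝ) : ℝ :=
  ∑' n : ℕ, ((n : ℝ) + 1) ^ k * exp (-π * ((n : ℝ) + 1) ^ 2 * t)

lemma summable_thetaMoment (k : ℕ) {t : ℝ} (ht : 0 < t) :
    Summable fun n : ℕ ↦ ((n : ℝ) + 1) ^ k * exp (-π * ((n : ℝ) + 1) ^ 2 * t) := by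
  have hgeom := (summable_nat_add_iff 1).2
    (summable_pow_mul_exp_neg_nat_mul k (mul_pos pi_pos ht))
  push_cast at hgeom
  refine hgeom.of_nonneg_of_le (fun n ↦ by positivity) fun n ↦ ?_
  gcongr ?_ * exp ?_
  have hn : (0 : ℝ) ≤ n := n.cast_nonneg
  nlinarith [mul_nonneg (mul_pos pi_pos ht).le (mul_nonneg hn (by linarith : (0 : ℝ) ≤ n + 1))]

lemma hasDerivAt_thetaMoment (k : ℕ) {t : ℝ} (ht : 0 < t) :
    HasDerivAt (thetaMoment k) (-π * thetaMoment (k + 2) t) t := by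
  have hmem : t ∈ Set.Ioi (t / 2) := by simp only [Set.mem_Ioi]; linarith
  have h := hasDerivAt_tsum_of_isPreconnected
    (g := fun (n : ℕ) (y : ℝ) ↦ ((n : ℝ) + 1) ^ k * exp (-π * ((n : ℝ) + 1) ^ 2 * y))
    (g' := fun (n : ℕ) (y : ℝ) ↦
      -π * (((n : ℝ) + 1) ^ (k + 2) * exp (-π * ((n : ℝ) + 1) ^ 2 * y)))
    ((summable_thetaMoment (k + 2) (half_pos ht)).mul_left π) isOpen_Ioi isPreconnected_Ioi
    (fun n y _ ↦ ?_) (fun n y hy ↦ ?_) hmem (summable_thetaMoment k ht) hmem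
  · rwa [tsum_mul_left] at h
  · refine ((hasDerivAt_exp_const_mul (-π * ((n : ℝ) + 1) ^ 2) y).const_mul
      (((n : ℝ) + 1) ^ k)).congr_deriv ?_
    ring
  · rw [norm_mul, norm_neg, norm_of_nonneg pi_pos.le, norm_of_nonneg (by positivity)]
    gcongr ?_ * (?_ * exp ?_)
    have hy : 0 ≤ y - t / 2 := by linarith [Set.mem_Ioi.1 hy]
    nlinarith [mul_nonneg (mul_nonneg pi_pos.le (sq_nonneg ((n : ℝ) + 1))) hy]

lemma hasDerivAt_exp_mul_thetaMoment_exp (k : ℕ) (c x : ℝ) :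
    HasDerivAt (fun x ↦ exp (c * x) * thetaMoment k (exp (2 * x)))
      (c * (exp (c * x) * thetaMoment k (exp (2 * x)))
        - 2 * π * (exp ((c + 2) * x) * thetaMoment (k + 2) (exp (2 * x)))) x := by
  have hψ := (hasDerivAt_thetaMoment k (exp_pos (2 * x))).comp x (hasDerivAt_exp_const_mul 2 x)
  refine ((hasDerivAt_exp_const_mul c x).mul hψ).congr_deriv ?_
  rw [Function.comp_apply, add_mul, exp_add]
  ring

lemma hasSum_riemannPhi (x : ℝ) :
    HasSum (fun n : ℕ ↦ (4 * π ^ 2 * ((n : ℝ) + 1) ^ 4 * exp (9 * x / 2)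
        - 6 * π * ((n : ℝ) + 1) ^ 2 * exp (5 * x / 2))
        * exp (-π * ((n : ℝ) + 1) ^ 2 * exp (2 * x)))
      (4 * π ^ 2 * (exp (9 / 2 * x) * thetaMoment 4 (exp (2 * x)))
        - 6 * π * (exp (5 / 2 * x) * thetaMoment 2 (exp (2 * x)))) := by
  have ht := exp_pos (2 * x)
  refine ((((summable_thetaMoment 4 ht).hasSum.mul_left (exp (9 / 2 * x))).mul_left
    (4 * π ^ 2)).sub (((summable_thetaMoment 2 ht).hasSum.mul_left (exp (5 / 2 * x))).mul_left
    (6 * π))).congr_fun fun n ↦ ?_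
  ring_nf

lemma cosKernel_zero_eq_one_add_two_mul_thetaMoment {t : ℝ} (ht : 0 < t) :
    HurwitzZeta.cosKernel 0 t = 1 + 2 * thetaMoment 0 t := by
  have h := HurwitzZeta.hasSum_nat_cosKernel₀ 0 ht
  simp only [mul_zero, zero_mul, cos_zero, mul_one, QuotientAddGroup.mk_zero] at h
  have h' := (summable_thetaMoment 0 ht).hasSum.mul_left 2
  simp only [thetaMoment, pow_zero, one_mul] at h' ⊢
  linarith [h.unique h']

lemma thetaMoment_zero_functional_equation {t : ℝ} (ht : 0 < t) :
    1 + 2 * thetaMoment 0 t = t ^ (-(1 / 2) : ℝ) * (1 + 2 * thetaMoment 0 t⁻¹) := by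
  have h := HurwitzZeta.evenKernel_functional_equation 0 t
  rw [HurwitzZeta.evenKernel_eq_cosKernel_of_zero, one_div t,
    cosKernel_zero_eq_one_add_two_mul_thetaMoment ht,
    cosKernel_zero_eq_one_add_two_mul_thetaMoment (inv_pos.2 ht)] at h
  rw [h, rpow_neg ht.le, one_div]

/-- `exp (x / 2) * θ (exp (2 * x))` for the Jacobi theta function `θ = 1 + 2 * thetaMoment 0`. -/
noncomputable def symmetrizedTheta (x : ℝ) : ℝ :=
  exp (x / 2) * (1 + 2 * thetaMoment 0 (exp (2 * x)))

lemma symmetrizedTheta_even : Function.Even symmetrizedTheta := by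
  intro x
  have h := thetaMoment_zero_functional_equation (exp_pos (-(2 * x)))
  rw [← exp_neg, neg_neg, ← exp_mul] at h
  simp only [symmetrizedTheta, mul_neg, h, ← mul_assoc, ← exp_add]
  ring_nf

lemma iteratedDeriv_two_symmetrizedTheta (x : ℝ) :
    iteratedDeriv 2 symmetrizedTheta x = symmetrizedTheta x / 4 + 2 * RiemannPhi x := by
  have hχ₀ := hasDerivAt_exp_mul_thetaMoment_exp 0 (1 / 2)
  have hχ₂ := hasDerivAt_exp_mul_thetaMoment_exp 2 (5 / 2)
  norm_num at hχ₀ hχ₂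
  have hF : symmetrizedTheta =
      fun x ↦ exp (1 / 2 * x) + 2 * (exp (1 / 2 * x) * thetaMoment 0 (exp (2 * x))) := by
    funext x
    simp only [symmetrizedTheta]
    ring_nf
  have hF' : deriv symmetrizedTheta = fun x ↦ 1 / 2 * exp (1 / 2 * x)
      + 2 * (1 / 2 * (exp (1 / 2 * x) * thetaMoment 0 (exp (2 * x)))
        - 2 * π * (exp (5 / 2 * x) * thetaMoment 2 (exp (2 * x)))) := by
    funext y
    rw [hF]
    exact ((hasDerivAt_exp_const_mul (1 / 2) y).fun_add ((hχ₀ y).const_mul 2)).deriv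
  have hF'' := ((hasDerivAt_exp_const_mul (1 / 2) x).const_mul (1 / 2)).fun_add
    ((((hχ₀ x).const_mul (1 / 2)).fun_sub ((hχ₂ x).const_mul (2 * π))).const_mul 2)
  rw [iteratedDeriv_succ, iteratedDeriv_one, hF', hF''.deriv, RiemannPhi,
    (hasSum_riemannPhi x).tsum_eq, hF]
  ring

lemma riemannPhi_neg (x : ℝ) : RiemannPhi (-x) = RiemannPhi x := by
  have h := symmetrizedTheta_even.iteratedDeriv even_two x
  rw [iteratedDeriv_two_symmetrizedTheta, iteratedDeriv_two_symmetrizedTheta,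
    symmetrizedTheta_even x] at h
  linarith

lemma riemannPhi_pos_of_nonneg {x : ℝ} (hx : 0 ≤ x) : 0 < RiemannPhi x := by
  have hE : 1 ≤ exp (2 * x) := one_le_exp (by linarith)
  have term_pos (n : ℕ) : 0 < (4 * π ^ 2 * ((n : ℝ) + 1) ^ 4 * exp (9 * x / 2)
      - 6 * π * ((n : ℝ) + 1) ^ 2 * exp (5 * x / 2))
      * exp (-π * ((n : ℝ) + 1) ^ 2 * exp (2 * x)) := by
    have hn : (1 : ℝ) ≤ ((n : ℝ) + 1) ^ 2 := one_le_pow₀ (by simp)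
    have h3 : 3 < 2 * π * ((n : ℝ) + 1) ^ 2 * exp (2 * x) := by
      nlinarith [pi_gt_three, mul_le_mul hn hE zero_le_one (by positivity)]
    have hfactor : 4 * π ^ 2 * ((n : ℝ) + 1) ^ 4 * exp (9 * x / 2)
        - 6 * π * ((n : ℝ) + 1) ^ 2 * exp (5 * x / 2)
        = 2 * π * ((n : ℝ) + 1) ^ 2 * exp (5 * x / 2)
          * (2 * π * ((n : ℝ) + 1) ^ 2 * exp (2 * x) - 3) := by
      rw [show 9 * x / 2 = 5 * x / 2 + 2 * x by ring, exp_add]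
      ring
    rw [hfactor]
    exact mul_pos (mul_pos (by positivity) (sub_pos.2 h3)) (exp_pos _)
  exact (hasSum_riemannPhi x).summable.tsum_pos (fun n ↦ (term_pos n).le) 0 (term_pos 0)

theorem phi_pos (x : ℝ) : 0 < RiemannPhi x := by
  rcases le_total 0 x with hx | hx
  · exact riemannPhi_pos_of_nonneg hx
  · simpa [riemannPhi_neg] using riemannPhi_pos_of_nonneg (neg_nonneg.2 hx)
end

section
/- Let V be a polynomial with complex coefficients satisfying V(1) = 0 and let g be a nonzero complex number; for each natural number N define Q_N(y) = (−g)^N · (d^N/da^N)[exp(−(V(a+1) − a·y)/g)] evaluated at a = 0. Then y ↦ Q_N(y) is a polynomial function of degree exactly N with leading coefficient (−1)^N; that is, there exists a polynomial P of degree N and leading coefficient (−1)^N with P(y) = Q_N(y) for all y ∈ ℂ. -/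
/-!
Factor the integrand as `exp (-V (a + 1) / g) * exp ((y / g) * a)`. By Leibniz's rule the
`N`-th derivative at `0` is `∑ i, (N choose i) dᵢ (y / g)^(N - i)`, where `dᵢ` is the `i`-th
derivative of the first factor at `0`, so `Q` is a polynomial in `y` of degree at most `N`.
Its `y^N` coefficient is `(-g)^N d₀ g^(-N) = (-1)^N`, because `d₀ = exp (-V 1 / g) = 1`.
-/

open Finset Polynomial

theorem iteratedDeriv_mul_cexp_const_mul {n : ℕ} {f : ℂ → ℂ} {x : ℂ}
    (hf : ContDiffAt ℂ n f x) (c : ℂ) :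
    iteratedDeriv n (fun a => f a * Complex.exp (c * a)) x =
      (∑ i ∈ range (n + 1), n.choose i * iteratedDeriv i f x * c ^ (n - i)) *
        Complex.exp (c * x) := by
  rw [iteratedDeriv_fun_mul hf (by fun_prop), sum_mul]
  simp [mul_assoc]

section SumCMulXPowSub

variable {R : Type*} [Semiring R]

theorem coeff_sum_C_mul_X_pow_sub_self (n : ℕ) (b : ℕ → R) :
    (∑ i ∈ range (n + 1), C (b i) * X ^ (n - i)).coeff n = b 0 := by
  rw [finsetSum_coeff, sum_eq_single 0]
  · simp
  · intro i hi hi0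
    rw [coeff_C_mul_X_pow, if_neg (by grind)]
  · simp

theorem degree_sum_C_mul_X_pow_sub_le (n : ℕ) (b : ℕ → R) :
    (∑ i ∈ range (n + 1), C (b i) * X ^ (n - i)).degree ≤ (n : WithBot ℕ) := by
  refine (degree_sum_le _ _).trans (Finset.sup_le fun i _ => ?_)
  exact (degree_C_mul_X_pow_le _ _).trans (by exact_mod_cast Nat.sub_le n i)

theorem degree_sum_C_mul_X_pow_sub {n : ℕ} {b : ℕ → R} (hb : b 0 ≠ 0) :
    (∑ i ∈ range (n + 1), C (b i) * X ^ (n - i)).degree = (n : WithBot ℕ) :=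
  degree_eq_of_le_of_coeff_ne_zero (degree_sum_C_mul_X_pow_sub_le n b)
    (by rwa [coeff_sum_C_mul_X_pow_sub_self])

theorem leadingCoeff_sum_C_mul_X_pow_sub {n : ℕ} {b : ℕ → R} (hb : b 0 ≠ 0) :
    (∑ i ∈ range (n + 1), C (b i) * X ^ (n - i)).leadingCoeff = b 0 := by
  rw [leadingCoeff, natDegree_eq_of_degree_eq_some (degree_sum_C_mul_X_pow_sub hb),
    coeff_sum_C_mul_X_pow_sub_self]

end SumCMulXPowSub

theorem Polynomial.contDiff_eval {𝕜 : Type*} [NontriviallyNormedField 𝕜] (p : 𝕜[X])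
    (n : WithTop ℕ∞) : ContDiff 𝕜 n fun x => p.eval x := by
  simpa using p.contDiff_aeval (𝕜 := 𝕜) n

theorem two_matrix_model_Q_is_monic_poly (V : Polynomial ℂ) (hV : V.eval 1 = 0)
    (g : ℂ) (hg : g ≠ 0) (N : ℕ)
    (Q : ℂ → ℂ)
    (hQ : ∀ y : ℂ, Q y = (-g) ^ N *
      iteratedDeriv N (fun a : ℂ => Complex.exp (-(V.eval (a + 1) - a * y) / g)) 0) :
    ∃ P : Polynomial ℂ, P.degree = N ∧ P.leadingCoeff = (-1) ^ N ∧
      ∀ y : ℂ, P.eval y = Q y := by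
  set f : ℂ → ℂ := fun a => Complex.exp (-V.eval (a + 1) / g)
  have hf : ContDiffAt ℂ N f 0 := by
    have := V.contDiff_eval N
    fun_prop
  set b : ℕ → ℂ := fun i => (-g) ^ N * N.choose i * iteratedDeriv i f 0 * g⁻¹ ^ (N - i)
  have hb : b 0 = (-1) ^ N := by
    simp only [b, f, iteratedDeriv_zero, zero_add, hV, neg_zero, zero_div, Complex.exp_zero,
      Nat.choose_zero_right, Nat.cast_one, mul_one, Nat.sub_zero, inv_pow]
    rw [neg_pow, mul_inv_cancel_right₀ (pow_ne_zero N hg)]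
  have hb0 : b 0 ≠ 0 := hb ▸ pow_ne_zero _ (neg_ne_zero.mpr one_ne_zero)
  refine ⟨∑ i ∈ range (N + 1), C (b i) * X ^ (N - i), degree_sum_C_mul_X_pow_sub hb0,
    hb ▸ leadingCoeff_sum_C_mul_X_pow_sub hb0, fun y => ?_⟩
  have hsplit : (fun a => Complex.exp (-(V.eval (a + 1) - a * y) / g)) =
      fun a => f a * Complex.exp (y / g * a) := by
    funext a
    rw [← Complex.exp_add]
    ring_nf
  rw [hQ, hsplit, iteratedDeriv_mul_cexp_const_mul hf, mul_zero,
    Complex.exp_zero, mul_one, mul_sum, eval_finsetSum]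
  refine sum_congr rfl fun i _ => ?_
  simp only [eval_C_mul, eval_X_pow, b, div_eq_mul_inv, inv_pow]
  ring
end
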